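/- For every i ≥ -1 and (p,p') ∈ ℤ², the region Reg_i(p,p') equals the set of integer points (x,y) ∈ ℤ² satisfying x ≥ p - i, y ≥ p' - i, and x + y ≥ p + p' - i - 1. -/

import Mathlib

/-!
With the product order on `ℤ × ℤ`, adding `ℤ₊²` is taking the upper closure. For `i ≥ 0` the
staircase `St_i(p,p')` is the full lattice segment of the antidiagonal `x + y = c` between the
lines `x = x₀` and `y = y₀`, and the upper closure of such a segment is the region
`x ≥ x₀, y ≥ y₀, x + y ≥ c`. For `i = -1` the region is the quadrant above `(p+1, p'+1)`, on which
the diagonal inequality holds automatically.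
-/

/-- The staircase set `St_i`: for `i > 0` it is `{(r,s) : r+s = -i-1, r < 0, s < 0}`,
and for `i ≤ 0` it is `{(r,s) : r+s = -i, r ≥ 0, s ≥ 0}`. -/
def stSet (i : ℤ) : Set (ℤ × ℤ) :=
  if 0 < i then {z | z.1 + z.2 = -i - 1 ∧ z.1 < 0 ∧ z.2 < 0}
  else {z | z.1 + z.2 = -i ∧ 0 ≤ z.1 ∧ 0 ≤ z.2}

/-- The translated staircase `St_i(p,p') = (p,p') + St_i`. -/
def stSetT (i p p' : ℤ) : Set (ℤ × ℤ) :=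
  (fun z : ℤ × ℤ => (p + z.1, p' + z.2)) '' stSet i

/-- `Reg_i(p,p')`: for `i ≥ 0` the Minkowski sum `ℤ₊² + St_i(p,p')`, and for `i < 0`
(meant for `i = -1`) the set `ℤ₊² + (p+1, p'+1)`. -/
def regMink (i p p' : ℤ) : Set (ℤ × ℤ) :=
  if 0 ≤ i then
    {z | ∃ a b : ℤ, 0 ≤ a ∧ 0 ≤ b ∧ ∃ s ∈ stSetT i p p', z = (a + s.1, b + s.2)}
  else
    {z | ∃ a b : ℤ, 0 ≤ a ∧ 0 ≤ b ∧ z = (a + (p + 1), b + (p' + 1))}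

def antidiagSegment (x₀ y₀ n : ℤ) : Set (ℤ × ℤ) :=
  {z | x₀ ≤ z.1 ∧ y₀ ≤ z.2 ∧ z.1 + z.2 = x₀ + y₀ + n}

theorem coe_upperClosure_antidiagSegment {x₀ y₀ n : ℤ} (hn : 0 ≤ n) :
    (upperClosure (antidiagSegment x₀ y₀ n) : Set (ℤ × ℤ)) =
      {z | x₀ ≤ z.1 ∧ y₀ ≤ z.2 ∧ x₀ + y₀ + n ≤ z.1 + z.2} := by
  ext ⟨x, y⟩
  simp only [SetLike.mem_coe, mem_upperClosure, antidiagSegment, Set.mem_ofPred_eq,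
    Prod.exists, Prod.mk_le_mk]
  constructor
  · rintro ⟨u, v, ⟨hu, hv, huv⟩, hux, hvy⟩
    omega
  · rintro ⟨hx, hy, hxy⟩
    -- the rightmost point of the segment with first coordinate at most `x`
    refine ⟨min x (x₀ + n), x₀ + y₀ + n - min x (x₀ + n), ?_, ?_, ?_⟩ <;> omega

theorem stSetT_of_pos {i : ℤ} (hi : 0 < i) (p p' : ℤ) :
    stSetT i p p' = antidiagSegment (p - i) (p' - i) (i - 1) := by
  ext ⟨x, y⟩
  simp only [stSetT, stSet, if_pos hi, antidiagSegment, Set.mem_image, Set.mem_ofPred_eq,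
    Prod.exists, Prod.mk.injEq]
  constructor
  · rintro ⟨r, s, ⟨hrs, hr, hs⟩, rfl, rfl⟩
    omega
  · rintro ⟨hx, hy, hxy⟩
    exact ⟨x - p, y - p', by omega, by omega, by omega⟩

theorem stSetT_zero (p p' : ℤ) : stSetT 0 p p' = antidiagSegment p p' 0 := by
  ext ⟨x, y⟩
  simp only [stSetT, stSet, lt_irrefl, if_false, antidiagSegment, Set.mem_image,
    Set.mem_ofPred_eq, Prod.exists, Prod.mk.injEq]
  constructor
  · rintro ⟨r, s, ⟨hrs, hr, hs⟩, rfl, rfl⟩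
    omega
  · rintro ⟨hx, hy, hxy⟩
    exact ⟨x - p, y - p', by omega, by omega, by omega⟩

theorem regMink_of_nonneg {i : ℤ} (hi : 0 ≤ i) (p p' : ℤ) :
    regMink i p p' = upperClosure (stSetT i p p') := by
  ext ⟨x, y⟩
  simp only [regMink, if_pos hi, Set.mem_ofPred_eq, SetLike.mem_coe, mem_upperClosure,
    Prod.mk.injEq]
  constructor
  · rintro ⟨a, b, ha, hb, s, hs, rfl, rfl⟩
    exact ⟨s, hs, by simp only [Prod.le_def]; omega⟩
  · rintro ⟨s, hs, hsx, hsy⟩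
    exact ⟨x - s.1, y - s.2, by omega, by omega, s, hs, by omega, by omega⟩

theorem regMink_of_neg {i : ℤ} (hi : i < 0) (p p' : ℤ) :
    regMink i p p' = Set.Ici (p + 1, p' + 1) := by
  ext ⟨x, y⟩
  simp only [regMink, if_neg hi.not_ge, Set.mem_ofPred_eq, Set.mem_Ici, Prod.mk_le_mk,
    Prod.mk.injEq]
  constructor
  · rintro ⟨a, b, ha, hb, rfl, rfl⟩
    omega
  · rintro ⟨hx, hy⟩
    exact ⟨x - (p + 1), y - (p' + 1), by omega, by omega, by omega, by omega⟩

/-- For every `i ≥ -1` and `(p,p')`, the region `Reg_i(p,p')` equals the set of points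
`(x,y) ∈ ℤ²` with `x ≥ p-i`, `y ≥ p'-i` and `x+y ≥ p+p'-i-1`. -/
theorem regMink_eq (i p p' : ℤ) (hi : -1 ≤ i) :
    regMink i p p' =
      {z : ℤ × ℤ | p - i ≤ z.1 ∧ p' - i ≤ z.2 ∧ p + p' - i - 1 ≤ z.1 + z.2} := by
  rcases lt_trichotomy i 0 with hneg | rfl | hpos
  · obtain rfl : i = -1 := by omega
    rw [regMink_of_neg hneg]
    ext ⟨x, y⟩
    simp only [Set.mem_Ici, Prod.mk_le_mk, Set.mem_ofPred_eq]
    omega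
  · rw [regMink_of_nonneg le_rfl, stSetT_zero, coe_upperClosure_antidiagSegment le_rfl]
    ext ⟨x, y⟩
    simp only [Set.mem_ofPred_eq]
    omega
  · rw [regMink_of_nonneg hpos.le, stSetT_of_pos hpos,
      coe_upperClosure_antidiagSegment (by omega)]
    ext ⟨x, y⟩
    simp only [Set.mem_ofPred_eq]
    omega
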